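/- Let n ≥ 2, let a_1,…,a_m be positive integers with a = a_1+⋯+a_m, and set N = n + a. Let w_1,…,w_m ∈ W_M (the subgroup of S_N generated by s_1,…,s_{n−1}) satisfy ℓ(w_1)+⋯+ℓ(w_m) = a. For each i set n_i := ∏_{k=1}^{a_i} (ε_n − ε_{n+k}) ∈ ℤ[ε_1,…,ε_N]. Then ∂_{w_m}(n_m·∂_{w_{m−1}}(n_{m−1}·⋯·∂_{w_1}(n_1)⋯)) = ∂_{w_m}(ε_n^{a_m}·∂_{w_{m−1}}(ε_n^{a_{m−1}}·⋯·∂_{w_1}(ε_n^{a_1})⋯)) in ℤ[ε_1,…,ε_N]. -/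

import Mathlib

/-!
Give `ε_j` weight `1` for `j ≤ n` and weight `0` otherwise. A reduced word of an element of `W_M`
only uses the letters `s_1, …, s_{n-1}`, since a left descent `s_i` of a permutation fixing
`n+1, …, N` must have `i < n`. Each such `∂_i` lowers the weight by one: monomial by monomial,
`f - s_i f = (ε_i - ε_{i+1}) g` with `g` of weight one less than `f`. As `n_i - ε_n^{a_i}` has
weight at most `a_i - 1`, induction on `m` bounds the weight of the difference of the two sides
by `a - (ℓ(w_1) + ⋯ + ℓ(w_m)) - 1 = -1`, so the difference vanishes.
-/

open MvPolynomial

/-- The adjacent transposition swapping `i` and `i+1` (0-indexed). -/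
def sT (n : ℕ) (i : ℕ) : Equiv.Perm (Fin n) :=
  if h : i + 1 < n then Equiv.swap ⟨i, Nat.lt_of_succ_lt h⟩ ⟨i + 1, h⟩ else 1

/-- Product of a word in the simple transpositions. -/
def wordProd (n : ℕ) (l : List ℕ) : Equiv.Perm (Fin n) := (l.map (sT n)).prod

/-- Number of inversions = Coxeter length. -/
def invLen {n : ℕ} (w : Equiv.Perm (Fin n)) : ℕ :=
  (Finset.univ.filter fun p : Fin n × Fin n => p.1 < p.2 ∧ w p.2 < w p.1).card

open Classical in
/-- The divided difference operator. -/
noncomputable def dd (n : ℕ) (i : ℕ) (f : MvPolynomial (Fin n) ℤ) : MvPolynomial (Fin n) ℤ :=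
  if h : i + 1 < n then
    if hd : ∃ g : MvPolynomial (Fin n) ℤ,
        f - rename (⇑(sT n i)) f = (X ⟨i, Nat.lt_of_succ_lt h⟩ - X ⟨i + 1, h⟩) * g
    then hd.choose else 0
  else 0

open Classical in
noncomputable def ddList (n : ℕ) : List ℕ → MvPolynomial (Fin n) ℤ → MvPolynomial (Fin n) ℤ
  | [], f => f
  | i :: t, f => dd n i (ddList n t f)

def IsReducedWord (n : ℕ) (l : List ℕ) (w : Equiv.Perm (Fin n)) : Prop :=
  (∀ i ∈ l, i + 1 < n) ∧ wordProd n l = w ∧ l.length = invLen w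

noncomputable def nest (n : ℕ) :
    List (List ℕ) → List (MvPolynomial (Fin n) ℤ) → MvPolynomial (Fin n) ℤ
  | [], _ => 1
  | _ :: _, [] => 1
  | l :: ls, g :: gs => ddList n l (g * nest n ls gs)

noncomputable def xv (n j : ℕ) : MvPolynomial (Fin n) ℤ := if h : j < n then X ⟨j, h⟩ else 0

namespace MvPolynomial

open Finsupp

section Weight

variable {σ R : Type*} [CommSemiring R] {w : σ → ℕ}

variable (R w) in
noncomputable def weightLE (d : ℤ) : Submodule R (MvPolynomial σ R) :=
  restrictSupport R {m | (weight w m : ℤ) ≤ d}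

theorem weightLE_mono {d e : ℤ} (h : d ≤ e) : weightLE R w d ≤ weightLE R w e :=
  restrictSupport_mono R fun _ hm => le_trans hm h

theorem eq_zero_of_mem_weightLE {d : ℤ} {f : MvPolynomial σ R} (hf : f ∈ weightLE R w d)
    (hd : d < 0) : f = 0 := by
  refine support_eq_empty.1 (Finset.eq_empty_of_forall_notMem fun m hm => ?_)
  have : (weight w m : ℤ) ≤ d := hf hm
  omega

theorem monomial_mem_weightLE {d : ℤ} {m : σ →₀ ℕ} (r : R) (h : (weight w m : ℤ) ≤ d) :
    monomial m r ∈ weightLE R w d :=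
  (monomial_mem_restrictSupport R).2 (Or.inl h)

theorem X_mem_weightLE {d : ℤ} {i : σ} (h : (w i : ℤ) ≤ d) :
    (X i : MvPolynomial σ R) ∈ weightLE R w d :=
  monomial_mem_weightLE _ (by simpa [weight_single] using h)

theorem one_mem_weightLE {d : ℤ} (hd : 0 ≤ d) : (1 : MvPolynomial σ R) ∈ weightLE R w d :=
  monomial_mem_weightLE (m := 0) _ (by simpa using hd)

open scoped Pointwise in
theorem mul_mem_weightLE {d e : ℤ} {f g : MvPolynomial σ R} (hf : f ∈ weightLE R w d)
    (hg : g ∈ weightLE R w e) : f * g ∈ weightLE R w (d + e) := by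
  have hfg := Submodule.mul_mem_mul hf hg
  rw [weightLE, weightLE, ← restrictSupport_add] at hfg
  refine restrictSupport_mono R ?_ hfg
  rintro _ ⟨a, ha, b, hb, rfl⟩
  simp only [Set.mem_ofPred_eq, map_add, Nat.cast_add] at ha hb ⊢
  omega

theorem pow_mem_weightLE {d : ℤ} {f : MvPolynomial σ R} (hf : f ∈ weightLE R w d) (k : ℕ) :
    f ^ k ∈ weightLE R w (k * d) := by
  induction k with
  | zero => simpa using one_mem_weightLE le_rfl
  | succ k ih => simpa [pow_succ, add_mul] using mul_mem_weightLE ih hf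

end Weight

section Ring

variable {σ R : Type*} [CommRing R] {w : σ → ℕ} {x y : σ}

theorem prod_sub_sub_pow_mem_weightLE {d : ℤ} {x : MvPolynomial σ R} {y : ℕ → MvPolynomial σ R}
    (hx : x ∈ weightLE R w d) (hy : ∀ k, y k ∈ weightLE R w (d - 1)) (a : ℕ) :
    ∏ k ∈ Finset.range a, (x - y k) - x ^ a ∈ weightLE R w (a * d - 1) := by
  induction a with
  | zero => simp
  | succ a ih =>
    have key : ∏ k ∈ Finset.range (a + 1), (x - y k) - x ^ (a + 1) =
        (∏ k ∈ Finset.range a, (x - y k) - x ^ a) * (x - y a) - x ^ a * y a := by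
      rw [Finset.prod_range_succ]; ring
    rw [key]
    have hxy : x - y a ∈ weightLE R w d := sub_mem hx (weightLE_mono (by omega) (hy a))
    refine sub_mem ?_ ?_
    · exact weightLE_mono (le_of_eq (by push_cast; ring)) (mul_mem_weightLE ih hxy)
    · exact weightLE_mono (le_of_eq (by push_cast; ring))
        (mul_mem_weightLE (pow_mem_weightLE hx a) (hy a))

theorem exists_X_pow_mul_X_pow_sub_eq_mul (hw : w x = w y) (a b : ℕ) :
    ∃ h ∈ weightLE R w ((a + b) * w x - w x),
      (X x : MvPolynomial σ R) ^ a * X y ^ b - X x ^ b * X y ^ a = (X x - X y) * h := by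
  wlog hba : b ≤ a generalizing a b
  · obtain ⟨h, hmem, hh⟩ := this b a (by omega)
    exact ⟨-h, neg_mem (by rwa [add_comm]), by linear_combination -hh⟩
  obtain ⟨c, rfl⟩ := Nat.exists_eq_add_of_le hba
  refine ⟨(X x * X y) ^ b * ∑ t ∈ Finset.range c, X x ^ t * X y ^ (c - 1 - t), ?_, ?_⟩
  · have hX : (X x : MvPolynomial σ R) ∈ weightLE R w (w x) := X_mem_weightLE le_rfl
    have hY : (X y : MvPolynomial σ R) ∈ weightLE R w (w x) := X_mem_weightLE (by rw [hw])
    have hsum : ∑ t ∈ Finset.range c, (X x ^ t * X y ^ (c - 1 - t) : MvPolynomial σ R) ∈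
        weightLE R w ((c - 1) * w x) := by
      refine sum_mem fun t ht => weightLE_mono (le_of_eq ?_)
        (mul_mem_weightLE (pow_mem_weightLE hX t) (pow_mem_weightLE hY _))
      have := Finset.mem_range.1 ht
      rw [← add_mul]; congr 1; omega
    exact weightLE_mono (by push_cast; nlinarith)
      (mul_mem_weightLE (pow_mem_weightLE (mul_mem_weightLE hX hY) b) hsum)
  · linear_combination (-((X x * X y : MvPolynomial σ R) ^ b)) *
      geom_sum₂_mul (X x : MvPolynomial σ R) (X y) c

end Ring

section Swap

variable {σ R : Type*} [CommRing R] [DecidableEq σ] {w : σ → ℕ} {x y : σ}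

theorem exists_monomial_sub_rename_swap_eq_mul (hxy : x ≠ y) (hw : w x = w y)
    (m : σ →₀ ℕ) (r : R) :
    ∃ g ∈ weightLE R w (weight w m - w x),
      monomial m r - rename (Equiv.swap x y) (monomial m r) = (X x - X y) * g := by
  set s := (m.erase x).erase y
  have hm : m = s + single x (m x) + single y (m y) := by
    rw [add_right_comm, ← erase_ne (f := m) hxy.symm, erase_add_single, erase_add_single]
  have hs : rename (Equiv.swap x y) (monomial s r) = monomial s r := by
    suffices mapDomain (Equiv.swap x y) s = s by rw [rename_monomial, this]
    refine (mapDomain_congr fun j hj => ?_).trans mapDomain_id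
    simp only [s, support_erase, Finset.mem_erase] at hj
    exact Equiv.swap_apply_of_ne_of_ne hj.2.1 hj.1
  have hmono : (monomial m r : MvPolynomial σ R) = monomial s r * (X x ^ m x * X y ^ m y) := by
    conv_lhs => rw [hm]
    simp only [X_pow_eq_monomial, monomial_mul, mul_one, add_assoc]
  obtain ⟨h, hh, hdiff⟩ := exists_X_pow_mul_X_pow_sub_eq_mul (R := R) hw (m x) (m y)
  refine ⟨monomial s r * h, ?_, ?_⟩
  · refine weightLE_mono (le_of_eq ?_) (mul_mem_weightLE (monomial_mem_weightLE r le_rfl) hh)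
    conv_rhs => rw [hm]
    simp only [map_add, weight_single, smul_eq_mul, hw]
    push_cast; ring
  · rw [hmono, map_mul, hs, map_mul, map_pow, map_pow, rename_X, rename_X, Equiv.swap_apply_left,
      Equiv.swap_apply_right]
    linear_combination (monomial s r : MvPolynomial σ R) * hdiff

theorem exists_sub_rename_swap_eq_mul_of_mem_weightLE (hxy : x ≠ y) (hw : w x = w y) {d : ℤ}
    {f : MvPolynomial σ R} (hf : f ∈ weightLE R w d) :
    ∃ g ∈ weightLE R w (d - w x), f - rename (Equiv.swap x y) f = (X x - X y) * g := by
  rw [weightLE, restrictSupport_eq_span] at hf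
  induction hf using Submodule.span_induction with
  | mem f hf =>
    obtain ⟨m, hm, rfl⟩ := hf
    obtain ⟨g, hg, hfg⟩ := exists_monomial_sub_rename_swap_eq_mul (R := R) hxy hw m 1
    exact ⟨g, weightLE_mono (by have : (weight w m : ℤ) ≤ d := hm; omega) hg, hfg⟩
  | zero => exact ⟨0, zero_mem _, by simp⟩
  | add f g _ _ hf hg =>
    obtain ⟨f', hf', hff'⟩ := hf
    obtain ⟨g', hg', hgg'⟩ := hg
    exact ⟨f' + g', add_mem hf' hg', by rw [map_add]; linear_combination hff' + hgg'⟩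
  | smul c f _ hf =>
    obtain ⟨f', hf', hff'⟩ := hf
    refine ⟨c • f', Submodule.smul_mem _ c hf', ?_⟩
    rw [map_smul, ← smul_sub, hff', mul_smul_comm]

theorem exists_sub_rename_swap_eq_mul (x y : σ) (f : MvPolynomial σ R) :
    ∃ g, f - rename (Equiv.swap x y) f = (X x - X y) * g := by
  rcases eq_or_ne x y with rfl | hxy
  · exact ⟨0, by simp⟩
  obtain ⟨g, -, hg⟩ := exists_sub_rename_swap_eq_mul_of_mem_weightLE (w := 0) (d := 0) hxy rfl
    (f := f) (fun m _ => by simp [weight_apply])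
  exact ⟨g, hg⟩

end Swap
end MvPolynomial

section DividedDifference

variable {n N i : ℕ}

theorem sT_of_lt (h : i + 1 < N) : sT N i = Equiv.swap ⟨i, by omega⟩ ⟨i + 1, h⟩ := dif_pos h

theorem sT_of_not_lt (h : ¬i + 1 < N) : sT N i = 1 := dif_neg h

theorem sT_mul_self (N i : ℕ) : sT N i * sT N i = 1 := by
  by_cases h : i + 1 < N
  · rw [sT_of_lt h, Equiv.swap_mul_self]
  · rw [sT_of_not_lt h, one_mul]

theorem dd_eq_of_sub_rename_eq (h : i + 1 < N) {f g : MvPolynomial (Fin N) ℤ}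
    (hg : f - rename (sT N i) f = (X ⟨i, by omega⟩ - X ⟨i + 1, h⟩) * g) : dd N i f = g := by
  have hex : ∃ g', f - rename (sT N i) f = (X ⟨i, by omega⟩ - X ⟨i + 1, h⟩) * g' := ⟨g, hg⟩
  have hne : (X ⟨i, by omega⟩ - X ⟨i + 1, h⟩ : MvPolynomial (Fin N) ℤ) ≠ 0 :=
    sub_ne_zero.2 fun hc => by simpa [Fin.ext_iff] using X_injective hc
  rw [dd, dif_pos h, dif_pos hex]
  exact mul_left_cancel₀ hne (hex.choose_spec.symm.trans hg)

theorem exists_sub_rename_sT_eq_mul (h : i + 1 < N) (f : MvPolynomial (Fin N) ℤ) :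
    ∃ g, f - rename (sT N i) f = (X ⟨i, by omega⟩ - X ⟨i + 1, h⟩) * g := by
  rw [sT_of_lt h]
  exact exists_sub_rename_swap_eq_mul _ _ f

theorem dd_sub (f g : MvPolynomial (Fin N) ℤ) : dd N i (f - g) = dd N i f - dd N i g := by
  by_cases h : i + 1 < N
  · obtain ⟨f', hf⟩ := exists_sub_rename_sT_eq_mul h f
    obtain ⟨g', hg⟩ := exists_sub_rename_sT_eq_mul h g
    rw [dd_eq_of_sub_rename_eq h hf, dd_eq_of_sub_rename_eq h hg]
    refine dd_eq_of_sub_rename_eq h ?_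
    rw [map_sub]
    linear_combination hf - hg
  · simp [dd, h]

theorem ddList_sub (l : List ℕ) (f g : MvPolynomial (Fin N) ℤ) :
    ddList N l (f - g) = ddList N l f - ddList N l g := by
  induction l with
  | nil => rfl
  | cons i l ih => rw [ddList, ddList, ddList, ih, dd_sub]

def headWeight (n N : ℕ) (j : Fin N) : ℕ := if (j : ℕ) < n then 1 else 0

local notation "F" => weightLE ℤ (headWeight n N)

theorem xv_mem_weightLE_one (j : ℕ) : xv N j ∈ F 1 := by
  unfold xv
  split_ifs
  · exact X_mem_weightLE (by unfold headWeight; split_ifs <;> simp)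
  · exact zero_mem _

theorem xv_mem_weightLE_zero {j : ℕ} (hj : n ≤ j) : xv N j ∈ F 0 := by
  unfold xv
  split_ifs
  · exact X_mem_weightLE (by simp [headWeight]; omega)
  · exact zero_mem _

theorem dd_mem_weightLE (hi : i + 1 < n) {d : ℤ} {f : MvPolynomial (Fin N) ℤ} (hf : f ∈ F d) :
    dd N i f ∈ F (d - 1) := by
  by_cases hN : i + 1 < N
  · obtain ⟨g, hg, hfg⟩ := exists_sub_rename_swap_eq_mul_of_mem_weightLE
      (x := ⟨i, by omega⟩) (y := ⟨i + 1, hN⟩) (by simp [Fin.ext_iff])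
      (by simp [headWeight, hi, show i < n by omega]) hf
    rw [← sT_of_lt hN] at hfg
    rw [dd_eq_of_sub_rename_eq hN hfg]
    simpa [headWeight, show i < n by omega] using hg
  · simp [dd, hN]

theorem ddList_mem_weightLE {l : List ℕ} (hl : ∀ i ∈ l, i + 1 < n) {d : ℤ}
    {f : MvPolynomial (Fin N) ℤ} (hf : f ∈ F d) : ddList N l f ∈ F (d - l.length) := by
  induction l with
  | nil => simpa [ddList] using hf
  | cons i l ih =>
    have := dd_mem_weightLE (hl i List.mem_cons_self)
      (ih fun j hj => hl j (List.mem_cons_of_mem i hj))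
    rw [ddList, List.length_cons]
    convert this using 2
    push_cast; ring

theorem nest_map_mem_weightLE {p : ℕ → MvPolynomial (Fin N) ℤ} (hp : ∀ a : ℕ, p a ∈ F a) :
    ∀ {ls : List (List ℕ)} {as : List ℕ}, (∀ l ∈ ls, ∀ i ∈ l, i + 1 < n) →
      ls.length = as.length → nest N ls (as.map p) ∈ F (as.sum - (ls.map List.length).sum)
  | [], [], _, _ => by simpa [nest] using one_mem_weightLE le_rfl
  | l :: ls, a :: as, hls, hlen => by
    have hrest := nest_map_mem_weightLE hp (fun l' hl' => hls l' (List.mem_cons_of_mem l hl'))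
      (Nat.succ_injective hlen)
    have := ddList_mem_weightLE (hls l List.mem_cons_self) (mul_mem_weightLE (hp a) hrest)
    simp only [nest, List.map_cons]
    convert this using 2
    simp only [List.sum_cons]; push_cast; ring

theorem nest_map_sub_mem_weightLE {p q : ℕ → MvPolynomial (Fin N) ℤ}
    (hq : ∀ a : ℕ, q a ∈ F a) (hpq : ∀ a : ℕ, p a - q a ∈ F (a - 1)) :
    ∀ {ls : List (List ℕ)} {as : List ℕ}, (∀ l ∈ ls, ∀ i ∈ l, i + 1 < n) →
      ls.length = as.length →
        nest N ls (as.map p) - nest N ls (as.map q) ∈ F (as.sum - (ls.map List.length).sum - 1)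
  | [], [], _, _ => by simp [nest]
  | l :: ls, a :: as, hls, hlen => by
    have hls' : ∀ l' ∈ ls, ∀ i ∈ l', i + 1 < n :=
      fun l' hl' => hls l' (List.mem_cons_of_mem l hl')
    have hp : ∀ a : ℕ, p a ∈ F a := fun a => by
      simpa using add_mem (weightLE_mono (by omega) (hpq a)) (hq a)
    have hP := nest_map_mem_weightLE hp hls' (Nat.succ_injective hlen)
    have hPQ := nest_map_sub_mem_weightLE hq hpq hls' (Nat.succ_injective hlen)
    set P := nest N ls (as.map p)
    set Q := nest N ls (as.map q)
    have hinner : p a * P - q a * Q ∈ F (a + (as.sum - (ls.map List.length).sum) - 1) := by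
      rw [show p a * P - q a * Q = (p a - q a) * P + q a * (P - Q) by ring]
      exact add_mem (weightLE_mono (le_of_eq (by ring)) (mul_mem_weightLE (hpq a) hP))
        (weightLE_mono (le_of_eq (by ring)) (mul_mem_weightLE (hq a) hPQ))
    have := ddList_mem_weightLE (hls l List.mem_cons_self) hinner
    simp only [nest, List.map_cons, ← ddList_sub]
    convert this using 2
    simp only [List.sum_cons]; push_cast; ring

end DividedDifference

section Length

variable {N : ℕ}

open Equiv

theorem swap_lt_swap_iff_of_succ {x y : Fin N} (hxy : (x : ℕ) + 1 = y) {u v : Fin N} :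
    swap x y u < swap x y v ↔ (u < v ∧ ¬(u = x ∧ v = y)) ∨ (u = y ∧ v = x) := by
  simp only [swap_apply_def, Fin.lt_def, Fin.ext_iff]
  split_ifs <;> omega

theorem invLen_swap_mul_of_lt {x y : Fin N} (hxy : (x : ℕ) + 1 = y) {w : Perm (Fin N)}
    (hw : w⁻¹ x < w⁻¹ y) : invLen (swap x y * w) = invLen w + 1 := by
  have hnotMem : (w⁻¹ x, w⁻¹ y) ∉
      Finset.univ.filter fun p : Fin N × Fin N => p.1 < p.2 ∧ w p.2 < w p.1 := by
    simp only [Finset.mem_filter, Finset.mem_univ, true_and, Perm.coe_inv, apply_symm_apply,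
      not_and, not_lt]
    exact fun _ => Fin.le_def.2 (by omega)
  rw [invLen, invLen, ← Finset.card_insert_of_notMem hnotMem]
  congr 1
  ext ⟨p, q⟩
  simp only [Finset.mem_filter, Finset.mem_insert, Finset.mem_univ, true_and, Perm.mul_apply,
    swap_lt_swap_iff_of_succ hxy, Prod.mk.injEq]
  constructor
  · rintro ⟨hpq, ⟨hlt, -⟩ | ⟨hq, hp⟩⟩
    · exact Or.inr ⟨hpq, hlt⟩
    · exact Or.inl ⟨Perm.eq_inv_iff_eq.2 hp, Perm.eq_inv_iff_eq.2 hq⟩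
  · rintro (⟨rfl, rfl⟩ | ⟨hpq, hlt⟩)
    · exact ⟨hw, Or.inr ⟨by simp, by simp⟩⟩
    · refine ⟨hpq, Or.inl ⟨hlt, fun ⟨hq, hp⟩ => ?_⟩⟩
      rw [← Perm.eq_inv_iff_eq] at hp hq
      exact lt_asymm hw (hp ▸ hq ▸ hpq)

theorem invLen_sT_mul_le (i : ℕ) (w : Perm (Fin N)) : invLen (sT N i * w) ≤ invLen w + 1 := by
  by_cases h : i + 1 < N
  · rw [sT_of_lt h]
    set s := swap (⟨i, by omega⟩ : Fin N) ⟨i + 1, h⟩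
    have hne := w⁻¹.injective.ne (a₁ := ⟨i, by omega⟩) (a₂ := ⟨i + 1, h⟩) (by simp)
    rcases lt_or_gt_of_ne hne with hw | hw
    · exact (invLen_swap_mul_of_lt rfl hw).le
    · have hsw : (s * w)⁻¹ ⟨i, by omega⟩ < (s * w)⁻¹ ⟨i + 1, h⟩ := by
        simpa [s, mul_inv_rev, swap_inv] using hw
      have := invLen_swap_mul_of_lt rfl hsw
      rw [← mul_assoc, swap_mul_self, one_mul] at this
      omega
  · simp [sT_of_not_lt h]

theorem invLen_wordProd_le (l : List ℕ) : invLen (wordProd N l) ≤ l.length := by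
  induction l with
  | nil => simpa [wordProd, invLen] using fun (a b : Fin N) (h : a < b) => h.le
  | cons i l ih =>
    have := invLen_sT_mul_le i (wordProd N l)
    show invLen (sT N i * wordProd N l) ≤ l.length + 1
    omega

theorem sT_mem_fixingSubgroup {n i : ℕ} (hi : i + 1 < n) :
    sT N i ∈ fixingSubgroup (Perm (Fin N)) {j : Fin N | n ≤ j} := by
  rw [mem_fixingSubgroup_iff]
  rintro j (hj : n ≤ (j : ℕ))
  by_cases h : i + 1 < N
  · rw [sT_of_lt h, Perm.smul_def]
    exact swap_apply_of_ne_of_ne (by simp [Fin.ext_iff]; omega) (by simp [Fin.ext_iff]; omega)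
  · simp [sT_of_not_lt h]

theorem closure_sT_le_fixingSubgroup (n : ℕ) :
    Subgroup.closure ((fun i => sT N i) '' {i : ℕ | i + 1 < n}) ≤
      fixingSubgroup (Perm (Fin N)) {j : Fin N | n ≤ j} :=
  (Subgroup.closure_le _).2 <| by rintro _ ⟨i, hi, rfl⟩; exact sT_mem_fixingSubgroup hi

theorem lt_of_invLen_sT_mul_lt {n i : ℕ} {w : Perm (Fin N)}
    (hw : w ∈ fixingSubgroup (Perm (Fin N)) {j : Fin N | n ≤ j})
    (hdesc : invLen (sT N i * w) < invLen w) : i + 1 < n := by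
  have hiN : i + 1 < N := by
    by_contra h
    simp [sT_of_not_lt h] at hdesc
  rw [sT_of_lt hiN] at hdesc
  set x : Fin N := ⟨i, by omega⟩
  set y : Fin N := ⟨i + 1, hiN⟩
  by_contra hin
  have hfix : ∀ j : Fin N, n ≤ (j : ℕ) → w j = j := (mem_fixingSubgroup_iff _).1 hw
  have hyx : w⁻¹ y < w⁻¹ x := by
    refine lt_of_le_of_ne (not_lt.1 fun hxy => ?_) (w⁻¹.injective.ne (by simp [x, y]))
    have := invLen_swap_mul_of_lt rfl hxy
    omega
  have hy : w⁻¹ y = y := by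
    rw [Perm.inv_eq_iff_eq, hfix y (by simp [y]; omega)]
  rw [hy] at hyx
  have hx : n ≤ ((w⁻¹ x : Fin N) : ℕ) := by
    have := Fin.lt_def.1 hyx
    simp only [y] at this
    omega
  have hp : x = w⁻¹ x := by simpa using hfix _ hx
  rw [← hp] at hyx
  exact absurd hyx (by simp [Fin.lt_def, x, y])

theorem lt_of_mem_of_isReducedWord {n : ℕ} {l : List ℕ} {w : Perm (Fin N)}
    (hw : w ∈ fixingSubgroup (Perm (Fin N)) {j : Fin N | n ≤ j}) (hl : IsReducedWord N l w) :
    ∀ i ∈ l, i + 1 < n := by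
  induction l generalizing w with
  | nil => simp
  | cons i l ih =>
    obtain ⟨hbound, hprod, hlen⟩ := hl
    have hw' : wordProd N l = sT N i * w := by
      rw [← hprod]
      show _ = sT N i * (sT N i * wordProd N l)
      rw [← mul_assoc, sT_mul_self, one_mul]
    have hle : invLen (sT N i * w) ≤ l.length := hw' ▸ invLen_wordProd_le l
    have hge : invLen w ≤ invLen (sT N i * w) + 1 := by
      simpa [← mul_assoc, sT_mul_self] using invLen_sT_mul_le i (sT N i * w)
    have hlen' : invLen w = l.length + 1 := by simpa using hlen.symm
    have hi : i + 1 < n := lt_of_invLen_sT_mul_lt hw (by omega)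
    intro j hj
    rcases List.mem_cons.1 hj with rfl | hj
    · exact hi
    · exact ih (mul_mem (sT_mem_fixingSubgroup hi) hw)
        ⟨fun k hk => hbound k (List.mem_cons_of_mem _ hk), hw', by omega⟩ j hj

theorem lt_of_mem_of_forall₂_isReducedWord {n : ℕ} {ls : List (List ℕ)}
    {ws : List (Perm (Fin N))}
    (hred : List.Forall₂ (fun l w => IsReducedWord N l w) ls ws)
    (hws : ∀ w ∈ ws, w ∈ fixingSubgroup (Perm (Fin N)) {j : Fin N | n ≤ j}) :
    ∀ l ∈ ls, ∀ i ∈ l, i + 1 < n := by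
  induction hred with
  | nil => simp
  | cons hlw _ ih =>
    intro l hl
    rcases List.mem_cons.1 hl with rfl | hl
    · exact lt_of_mem_of_isReducedWord (hws _ List.mem_cons_self) hlw
    · exact ih (fun w hw => hws w (List.mem_cons_of_mem _ hw)) l hl

end Length

theorem stmt8_general (n : ℕ) (asL : List ℕ) (N : ℕ)
    (ws : List (Equiv.Perm (Fin N))) (ls : List (List ℕ))
    (hws : ∀ w ∈ ws, w ∈ Subgroup.closure ((fun i => sT N i) '' {i : ℕ | i + 1 < n}))
    (hred : List.Forall₂ (fun l w => IsReducedWord N l w) ls ws)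
    (hlen : asL.length = ws.length)
    (hsum : (ws.map invLen).sum = asL.sum) :
    nest N ls (asL.map fun ai => ∏ k ∈ Finset.range ai, (xv N (n - 1) - xv N (n + k))) =
      nest N ls (asL.map fun ai => (xv N (n - 1)) ^ ai) := by
  have hletters := lt_of_mem_of_forall₂_isReducedWord hred
    fun w hw => closure_sT_le_fixingSubgroup n (hws w hw)
  have hlengths : ls.map List.length = ws.map invLen := by
    rw [← List.forall₂_eq_eq_eq, List.forall₂_map_left_iff, List.forall₂_map_right_iff]
    exact hred.imp fun _ _ h => h.2.2
  have hx := xv_mem_weightLE_one (n := n) (N := N) (n - 1)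
  have hy (k : ℕ) := xv_mem_weightLE_zero (N := N) (Nat.le_add_right n k)
  have hdiff := nest_map_sub_mem_weightLE (fun a => by simpa using pow_mem_weightLE hx a)
    (fun a => by simpa using prod_sub_sub_pow_mem_weightLE hx hy a)
    hletters (hred.length_eq.trans hlen.symm)
  rw [hlengths, hsum, sub_self] at hdiff
  exact sub_eq_zero.1 (eq_zero_of_mem_weightLE hdiff (by norm_num))

/-- with `N = n + a`, `w_1,…,w_m ∈ W_M` (the subgroup of `S_N` generated by
`s_1,…,s_{n−1}`), `Σ ℓ(w_i) = a = Σ a_i` (all `a_i > 0`), and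
`n_i = ∏_{k=1}^{a_i} (ε_n − ε_{n+k})`, one has
`∂_{w_m}(n_m·⋯·∂_{w_1}(n_1)⋯) = ∂_{w_m}(ε_n^{a_m}·⋯·∂_{w_1}(ε_n^{a_1})⋯)`.
Lists are ordered from the outermost to the innermost position. -/
theorem stmt8 (n : ℕ) (hn : 2 ≤ n) (asL : List ℕ) (hpos : ∀ x ∈ asL, 0 < x)
    (hm : asL ≠ []) (N : ℕ) (hN : N = n + asL.sum)
    (ws : List (Equiv.Perm (Fin N))) (ls : List (List ℕ))
    (hws : ∀ w ∈ ws, w ∈ Subgroup.closure ((fun i => sT N i) '' {i : ℕ | i + 1 < n}))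
    (hred : List.Forall₂ (fun l w => IsReducedWord N l w) ls ws)
    (hlen : asL.length = ws.length)
    (hsum : (ws.map invLen).sum = asL.sum) :
    nest N ls (asL.map fun ai => ∏ k ∈ Finset.range ai, (xv N (n - 1) - xv N (n + k))) =
      nest N ls (asL.map fun ai => (xv N (n - 1)) ^ ai) :=
  stmt8_general n asL N ws ls hws hred hlen hsum
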